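/- For the test field U(x,y) = (α(x+y), α(x-y)) with 0 < α and α√2 < 1, scheme (I) (zero corrective term) applied to any target M^d converges: Δ^j → 0 with ‖Δ^j‖ ≤ (α√2)^{j-1} ‖Δ^1‖ in the Euclidean norm. -/

import Mathlib

/-!
Because `U` is additive, the target cancels from the residual:
`Δ^{j+1} = U(M^j) - U(M^{j+1}) = -U(Δ^j)`. For the test field, `U/(α√2)` is an
isometry of the Euclidean plane, so every step multiplies `‖Δ^j‖` by exactly `α√2 < 1`.
-/

open Filter Topology

section Scheme

variable {E : Type*}

theorem residual_succ_eq_neg_map [AddCommGroup E] (U : E → E) (Md : E) {M Δ : ℕ → E}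
    (hU : ∀ p q, U (p + q) = U p + U q)
    (hM : ∀ j, 2 ≤ j → M j = M (j - 1) + Δ (j - 1))
    (hΔ : ∀ j, 1 ≤ j → Δ j = Md - M j - U (M j)) {j : ℕ} (hj : 1 ≤ j) :
    Δ (j + 1) = -U (Δ j) := by
  rw [hΔ (j + 1) (by omega), hM (j + 1) (by omega), Nat.add_sub_cancel, hU]
  calc Md - (M j + Δ j) - (U (M j) + U (Δ j))
      = (Md - M j - U (M j)) - Δ j - U (Δ j) := by abel
    _ = -U (Δ j) := by rw [← hΔ j hj]; abel

theorem norm_le_pow_mul_of_norm_succ_le [SeminormedAddGroup E] {Δ : ℕ → E}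
    {r : ℝ} (hr : 0 ≤ r) (h : ∀ j, 1 ≤ j → ‖Δ (j + 1)‖ ≤ r * ‖Δ j‖)
    {j : ℕ} (hj : 1 ≤ j) :
    ‖Δ j‖ ≤ r ^ (j - 1) * ‖Δ 1‖ := by
  obtain ⟨n, rfl⟩ := Nat.exists_eq_add_of_le' hj
  simpa using le_geom (u := fun k ↦ ‖Δ (k + 1)‖) hr n fun k _ ↦ h (k + 1) (by omega)

theorem tendsto_zero_of_norm_le_pow_mul [SeminormedAddGroup E] {Δ : ℕ → E} {r C : ℝ}
    (hr₀ : 0 ≤ r) (hr₁ : r < 1) (h : ∀ j, 1 ≤ j → ‖Δ j‖ ≤ r ^ (j - 1) * C) :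
    Tendsto Δ atTop (𝓝 0) := by
  have hgeom : Tendsto (fun j : ℕ ↦ r ^ (j - 1) * C) atTop (𝓝 0) := by
    simpa using ((tendsto_pow_atTop_nhds_zero_of_lt_one hr₀ hr₁).comp
      (tendsto_sub_atTop_nat 1)).mul_const C
  exact squeeze_zero_norm' (eventually_atTop.2 ⟨1, h⟩) hgeom

end Scheme

section TestField

variable {α : ℝ} {U : EuclideanSpace ℝ (Fin 2) → EuclideanSpace ℝ (Fin 2)}

theorem testField_map_add
    (hU : ∀ p : EuclideanSpace ℝ (Fin 2),
      U p 0 = α * (p 0 + p 1) ∧ U p 1 = α * (p 0 - p 1))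
    (p q : EuclideanSpace ℝ (Fin 2)) : U (p + q) = U p + U q := by
  ext i
  fin_cases i <;> simp [hU] <;> ring

theorem norm_testField (hα : 0 ≤ α)
    (hU : ∀ p : EuclideanSpace ℝ (Fin 2),
      U p 0 = α * (p 0 + p 1) ∧ U p 1 = α * (p 0 - p 1))
    (p : EuclideanSpace ℝ (Fin 2)) : ‖U p‖ = α * Real.sqrt 2 * ‖p‖ := by
  rw [← sq_eq_sq₀ (norm_nonneg _) (by positivity), mul_pow, mul_pow,
    EuclideanSpace.real_norm_sq_eq, EuclideanSpace.real_norm_sq_eq, Fin.sum_univ_two,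
    Fin.sum_univ_two, (hU p).1, (hU p).2, Real.sq_sqrt zero_le_two]
  ring

end TestField

theorem test_field_scheme_I_converges_general
    (α : ℝ) (hα : 0 < α) (h2 : α * Real.sqrt 2 < 1)
    (U : EuclideanSpace ℝ (Fin 2) → EuclideanSpace ℝ (Fin 2))
    (hU : ∀ p : EuclideanSpace ℝ (Fin 2),
      U p 0 = α * (p 0 + p 1) ∧ U p 1 = α * (p 0 - p 1))
    (Md : EuclideanSpace ℝ (Fin 2)) (M Δ : ℕ → EuclideanSpace ℝ (Fin 2))
    (hM : ∀ j, 2 ≤ j → M j = M (j - 1) + Δ (j - 1))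
    (hΔ : ∀ j, 1 ≤ j → Δ j = Md - M j - U (M j)) :
    Tendsto Δ atTop (𝓝 0) ∧
      ∀ j, 1 ≤ j → ‖Δ j‖ ≤ (α * Real.sqrt 2) ^ (j - 1) * ‖Δ 1‖ := by
  have hr : 0 ≤ α * Real.sqrt 2 := by positivity
  have step (j : ℕ) (hj : 1 ≤ j) : ‖Δ (j + 1)‖ = α * Real.sqrt 2 * ‖Δ j‖ := by
    rw [residual_succ_eq_neg_map U Md (testField_map_add hU) hM hΔ hj, norm_neg,
      norm_testField hα.le hU]
  have bound (j : ℕ) (hj : 1 ≤ j) :=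
    norm_le_pow_mul_of_norm_succ_le hr (fun k hk ↦ (step k hk).le) hj
  exact ⟨tendsto_zero_of_norm_le_pow_mul hr h2 bound, bound⟩

/-- For the test field U(x,y) = (α(x+y), α(x-y)) with 0 < α and α√2 < 1,
scheme (I) converges: Δ^j → 0 with ‖Δ^j‖ ≤ (α√2)^(j-1) ‖Δ^1‖ (Euclidean norm). -/
theorem test_field_scheme_I_converges
    (α : ℝ) (hα : 0 < α) (h2 : α * Real.sqrt 2 < 1)
    (U : EuclideanSpace ℝ (Fin 2) → EuclideanSpace ℝ (Fin 2))
    (hU : ∀ p : EuclideanSpace ℝ (Fin 2),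
      U p 0 = α * (p 0 + p 1) ∧ U p 1 = α * (p 0 - p 1))
    (Md : EuclideanSpace ℝ (Fin 2)) (M Δ : ℕ → EuclideanSpace ℝ (Fin 2))
    (hM1 : M 1 = Md)
    (hM : ∀ j, 2 ≤ j → M j = M (j - 1) + Δ (j - 1))
    (hΔ : ∀ j, 1 ≤ j → Δ j = Md - M j - U (M j)) :
    Tendsto Δ atTop (𝓝 0) ∧
      ∀ j, 1 ≤ j → ‖Δ j‖ ≤ (α * Real.sqrt 2) ^ (j - 1) * ‖Δ 1‖ :=
  test_field_scheme_I_converges_general α hα h2 U hU Md M Δ hM hΔ
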